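/- arXiv:2505.05529 — 4 statements merged into one kernel-verified Lean document; each statement's English description precedes it below -/
import Mathlib

section
/- For the 2-dimensional compatible associative algebra with e₁•e₁ = e₂ and e₁*e₁ = e₁, e₁*e₂ = e₂, e₂*e₁ = e₂ (all other products zero), a linear map d is a derivation of the compatible pair if and only if d(e₁) = 0 and d(e₂) = 0. -/
/-- `e₁•e₁ = e₂`. -/
def bul2 (x y : Fin 2 → ℂ) : Fin 2 → ℂ := ![0, x 0 * y 0]

/-- `e₁*e₁ = e₁`, `e₁*e₂ = e₂`, `e₂*e₁ = e₂`. -/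
def star2 (x y : Fin 2 → ℂ) : Fin 2 → ℂ := ![x 0 * y 0, x 0 * y 1 + x 1 * y 0]

lemma decomp (x : Fin 2 → ℂ) :
    x = x 0 • (Pi.single 0 1 : Fin 2 → ℂ) + x 1 • (Pi.single 1 1 : Fin 2 → ℂ) := by
  funext i
  fin_cases i <;> simp [Pi.single_apply]

/-- A linear map is a derivation of the compatible pair `(𝒜₂¹, 𝒜₂⁴)`
iff it vanishes on the basis, i.e. is zero. -/
theorem der_A21_A24 (d : (Fin 2 → ℂ) →ₗ[ℂ] (Fin 2 → ℂ)) :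
    ((∀ a b : Fin 2 → ℂ, d (bul2 a b) = bul2 (d a) b + bul2 a (d b)) ∧
     (∀ a b : Fin 2 → ℂ, d (star2 a b) = star2 (d a) b + star2 a (d b))) ↔
    (d (Pi.single 0 1 : Fin 2 → ℂ) = 0 ∧ d (Pi.single 1 1 : Fin 2 → ℂ) = 0) := by
  set e₁ : Fin 2 → ℂ := Pi.single 0 1 with he1
  set e₂ : Fin 2 → ℂ := Pi.single 1 1 with he2
  have h1 : e₁ 0 = 1 := by simp [he1]
  have h2 : e₁ 1 = 0 := by simp [he1, Pi.single_apply]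
  have h3 : e₂ 0 = 0 := by simp [he2, Pi.single_apply]
  have h4 : e₂ 1 = 1 := by simp [he2]
  constructor
  · rintro ⟨hb, hs⟩
    have hse : star2 e₁ e₁ = e₁ := by
      funext i; fin_cases i <;> simp [star2, h1, h2]
    have hbe : bul2 e₁ e₁ = e₂ := by
      funext i; fin_cases i <;> simp [bul2, h1, h3, h4]
    have hs1 := hs e₁ e₁
    rw [hse] at hs1
    have hde1 : d e₁ = 0 := by
      funext i
      have := congrFun hs1 i
      fin_cases i <;> simp [star2, h1, h2] at this <;> simpa using this
    constructor
    · exact hde1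
    · have hb1 := hb e₁ e₁
      rw [hbe, hde1] at hb1
      rw [hb1]
      funext i; fin_cases i <;> simp [bul2]
  · rintro ⟨hd1, hd2⟩
    have hz : ∀ x : Fin 2 → ℂ, d x = 0 := by
      intro x
      rw [decomp x, map_add, map_smul, map_smul, ← he1, ← he2, hd1, hd2]
      simp
    constructor <;> intro a b <;> rw [hz, hz, hz] <;>
      funext i <;> fin_cases i <;> simp [bul2, star2]
end

section
/- For the 2-dimensional compatible associative algebra with e₁•e₁ = e₂ and e₁*e₁ = e₁, e₁*e₂ = e₂, e₂*e₁ = e₂ (all other products zero), a linear map R is a Rota–Baxter operator (of weight 0) for both multiplications if and only if R(e₁) = r·e₂ for some r ∈ ℂ and R(e₂) = 0. -/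
/-- The Rota–Baxter identity of weight `0`. -/
def IsRotaBaxter {V : Type*} [Add V] (μ : V → V → V) (R : V → V) : Prop :=
  ∀ a b, μ (R a) (R b) = R (μ (R a) b + μ a (R b))

def scaledShift (r : ℂ) (x : Fin 2 → ℂ) : Fin 2 → ℂ := ![0, r * x 0]

theorem isRotaBaxter_bul2_scaledShift (r : ℂ) : IsRotaBaxter bul2 (scaledShift r) := by
  intro a b
  simp [bul2, scaledShift]

theorem isRotaBaxter_star2_scaledShift (r : ℂ) : IsRotaBaxter star2 (scaledShift r) := by
  intro a b
  simp [star2, scaledShift]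

local notation "e₁" => (Pi.single 0 1 : Fin 2 → ℂ)
local notation "e₂" => (Pi.single 1 1 : Fin 2 → ℂ)

namespace RotaBaxterA21A24

variable {R : (Fin 2 → ℂ) →ₗ[ℂ] (Fin 2 → ℂ)}

theorem apply_eq (x : Fin 2 → ℂ) : R x = x 0 • R e₁ + x 1 • R e₂ := by
  conv_lhs => rw [pi_eq_sum_univ' x]
  simp [Fin.sum_univ_two]

theorem coe_eq_scaledShift {r : ℂ} (h₁ : R e₁ = r • e₂) (h₂ : R e₂ = 0) : ⇑R = scaledShift r := by
  ext x i
  fin_cases i <;> simp [apply_eq x, h₁, h₂, scaledShift, mul_comm]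

theorem apply_single_one_apply_zero (h : IsRotaBaxter bul2 R) : R e₂ 0 = 0 := by
  have key : 0 = R e₂ 0 * R e₂ 0 := by
    have identity := congrFun (h e₁ e₂) 0
    rw [apply_eq (_ + _)] at identity
    simpa [bul2] using identity
  exact mul_self_eq_zero.mp key.symm

theorem apply_single_zero_apply_zero (h : IsRotaBaxter star2 R) (hc : R e₂ 0 = 0) :
    R e₁ 0 = 0 := by
  have key : R e₁ 0 * R e₁ 0 = (R e₁ 0 + R e₁ 0) * R e₁ 0 + (R e₁ 1 + R e₁ 1) * R e₂ 0 := by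
    have identity := congrFun (h e₁ e₁) 0
    rw [apply_eq (_ + _)] at identity
    simpa [star2] using identity
  exact mul_self_eq_zero.mp (by linear_combination -key - 2 * R e₁ 1 * hc)

theorem apply_single_one_apply_one (h : IsRotaBaxter star2 R) : R e₂ 1 = 0 := by
  have key : R e₁ 0 * R e₂ 1 + R e₁ 1 * R e₂ 0 =
      R e₂ 0 * R e₁ 1 + (R e₁ 0 + R e₂ 1) * R e₂ 1 := by
    have identity := congrFun (h e₁ e₂) 1
    rw [apply_eq (_ + _)] at identity
    simpa [star2] using identity
  exact mul_self_eq_zero.mp (by linear_combination -key)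

end RotaBaxterA21A24

open RotaBaxterA21A24 in
/-- Rota–Baxter operators (weight 0) of the compatible pair `(𝒜₂¹, 𝒜₂⁴)`. -/
theorem rb_A21_A24 (R : (Fin 2 → ℂ) →ₗ[ℂ] (Fin 2 → ℂ)) :
    ((∀ a b : Fin 2 → ℂ, bul2 (R a) (R b) = R (bul2 (R a) b + bul2 a (R b))) ∧
     (∀ a b : Fin 2 → ℂ, star2 (R a) (R b) = R (star2 (R a) b + star2 a (R b)))) ↔
    (∃ r : ℂ, R (Pi.single 0 1 : Fin 2 → ℂ) = r • (Pi.single 1 1 : Fin 2 → ℂ)) ∧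
      R (Pi.single 1 1 : Fin 2 → ℂ) = 0 := by
  change IsRotaBaxter bul2 R ∧ IsRotaBaxter star2 R ↔ _
  constructor
  · rintro ⟨hbul, hstar⟩
    have hc := apply_single_one_apply_zero hbul
    have ha := apply_single_zero_apply_zero hstar hc
    have hd := apply_single_one_apply_one hstar
    refine ⟨⟨R e₁ 1, ?_⟩, ?_⟩ <;> ext i <;> fin_cases i <;> simp [ha, hc, hd]
  · rintro ⟨⟨r, h₁⟩, h₂⟩
    rw [coe_eq_scaledShift h₁ h₂]
    exact ⟨isRotaBaxter_bul2_scaledShift r, isRotaBaxter_star2_scaledShift r⟩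
end

section
/- The 3-dimensional pair given on basis (e₁, e₂, e₃) by e₁•e₃ = e₂, e₃•e₁ = e₂ and e₁*e₃ = e₂, e₃*e₁ = α e₂ (all other products zero), for any α ∈ ℂ, is a compatible associative algebra. -/
/-- `e₁•e₃ = e₂`, `e₃•e₁ = e₂`. -/
def bul3 (x y : Fin 3 → ℂ) : Fin 3 → ℂ := ![0, x 0 * y 2 + x 2 * y 0, 0]

/-- `e₁*e₃ = e₂`, `e₃*e₁ = α e₂`. -/
def star3 (α : ℂ) (x y : Fin 3 → ℂ) : Fin 3 → ℂ := ![0, x 0 * y 2 + α * (x 2 * y 0), 0]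

theorem pair_A31_A32_compatible (α : ℂ) :
    (∀ a b c : Fin 3 → ℂ, bul3 (bul3 a b) c = bul3 a (bul3 b c)) ∧
    (∀ a b c : Fin 3 → ℂ, star3 α (star3 α a b) c = star3 α a (star3 α b c)) ∧
    (∀ a b c : Fin 3 → ℂ, star3 α (bul3 a b) c + bul3 (star3 α a b) c
        = bul3 a (star3 α b c) + star3 α a (bul3 b c)) := by
  refine ⟨?_, ?_, ?_⟩ <;> intro a b c <;> funext i <;>
    fin_cases i <;> simp [bul3, star3]
end

section
/- The 4-dimensional pair with e₁•e₂ = e₃, e₂•e₁ = e₄ (all other • products zero) and e₁*e₂ = e₃, e₂*e₁ = e₄, e₂*e₂ = −e₃ (all other * products zero) is a compatible associative algebra. -/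
/-- `e₁•e₂ = e₃`, `e₂•e₁ = e₄`. -/
def bul4 (x y : Fin 4 → ℂ) : Fin 4 → ℂ := ![0, 0, x 0 * y 1, x 1 * y 0]

/-- `e₁*e₂ = e₃`, `e₂*e₁ = e₄`, `e₂*e₂ = -e₃`. -/
def star4 (x y : Fin 4 → ℂ) : Fin 4 → ℂ := ![0, 0, x 0 * y 1 - x 1 * y 1, x 1 * y 0]

theorem pair_A41_A43_compatible :
    (∀ a b c : Fin 4 → ℂ, bul4 (bul4 a b) c = bul4 a (bul4 b c)) ∧
    (∀ a b c : Fin 4 → ℂ, star4 (star4 a b) c = star4 a (star4 b c)) ∧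
    (∀ a b c : Fin 4 → ℂ, star4 (bul4 a b) c + bul4 (star4 a b) c
        = bul4 a (star4 b c) + star4 a (bul4 b c)) := by
  refine ⟨?_, ?_, ?_⟩ <;> intro a b c <;> funext i <;>
    fin_cases i <;> simp [bul4, star4]
end
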